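/- Let κ ≥ 0 and h > 0 with D(h,κ) := h − (1/4)𝖾₁₂(κ,h)² ≠ 0 and c_h⁴(1+κ) − 3κ ≠ 0. Then 𝖾_WB(κ,h) = 𝖾₁₁(κ,h) − D(h,κ)⁻¹ · ( c_h⁻¹(1+κ)^{1/2} + h·𝖿₁₁(κ,h)² + 𝖾₁₂(κ,h)·𝖿₁₁(κ,h)·c_h^{−1/2}(1+κ)^{1/4} ), where 𝖾_WB(κ,h) := [(21 − 25c_h⁴ + 6c_h⁸)(1+κ)² + (−12 + 6c_h⁴ + 3c_h⁸)(1+κ) + 9c_h⁴] / [8c_h³(1+κ)^{1/2}(c_h⁴(1+κ) − 3κ)] − (1+κ)^{1/2}·[ (3h·c_h⁸ − 6c_h⁶ − 6h·c_h⁴ + 6c_h² + 3h)(1+κ) + 4c_h⁶ ] / [4c_h³·D(h,κ)]. -/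

import Mathlib

/-- `c_h := √(tanh h)`. -/
noncomputable def ch (h : ℝ) : ℝ := Real.sqrt (Real.tanh h)

/-- The coefficient `𝖾₁₂(κ,h)`. -/
noncomputable def e12 (κ h : ℝ) : ℝ :=
  2 * Real.sqrt (1 + κ) * ch h *
    ((ch h ^ 2 + (1 - ch h ^ 4) * h) / (2 * ch h ^ 2) + κ / (1 + κ))

/-- `D(h,κ) := h − (1/4)·𝖾₁₂(κ,h)²`. -/
noncomputable def Dhk (h κ : ℝ) : ℝ := h - (1 / 4) * e12 κ h ^ 2

/-- The coefficient `𝖾₁₁(κ,h)`. -/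
noncomputable def e11 (κ h : ℝ) : ℝ :=
  ((21 - 25 * ch h ^ 4 + 6 * ch h ^ 8) * (1 + κ) ^ 2
      + (-12 + 6 * ch h ^ 4 + 3 * ch h ^ 8) * (1 + κ) + 9 * ch h ^ 4)
    / (8 * ch h ^ 3 * Real.sqrt (1 + κ) * (ch h ^ 4 * (1 + κ) - 3 * κ))

/-- The coefficient `𝖿₁₁(κ,h)`. -/
noncomputable def f11 (κ h : ℝ) : ℝ :=
  -(1 / 2) * (ch h ^ ((5 : ℝ) / 2) - ch h ^ (-(3 : ℝ) / 2)) * (1 + κ) ^ ((3 : ℝ) / 4)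

/-- The Whitham–Benjamin function `𝖾_WB(κ,h)`. -/
noncomputable def eWB (κ h : ℝ) : ℝ :=
  ((21 - 25 * ch h ^ 4 + 6 * ch h ^ 8) * (1 + κ) ^ 2
      + (-12 + 6 * ch h ^ 4 + 3 * ch h ^ 8) * (1 + κ) + 9 * ch h ^ 4)
    / (8 * ch h ^ 3 * Real.sqrt (1 + κ) * (ch h ^ 4 * (1 + κ) - 3 * κ))
  - Real.sqrt (1 + κ) *
      ((3 * h * ch h ^ 8 - 6 * ch h ^ 6 - 6 * h * ch h ^ 4 + 6 * ch h ^ 2 + 3 * h) * (1 + κ)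
          + 4 * ch h ^ 6)
    / (4 * ch h ^ 3 * Dhk h κ)

theorem eWB_eq (κ h : ℝ) (hκ : 0 ≤ κ) (hh : 0 < h) (hD : Dhk h κ ≠ 0)
    (hden : ch h ^ 4 * (1 + κ) - 3 * κ ≠ 0) :
    eWB κ h = e11 κ h - (Dhk h κ)⁻¹ *
      ((ch h)⁻¹ * Real.sqrt (1 + κ) + h * f11 κ h ^ 2
        + e12 κ h * f11 κ h * ch h ^ (-(1 : ℝ) / 2) * (1 + κ) ^ ((1 : ℝ) / 4)) := by
  have htanh : 0 < Real.tanh h := by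
    rw [Real.tanh_eq_sinh_div_cosh]
    exact div_pos (Real.sinh_pos_iff.mpr hh) (Real.cosh_pos h)
  have hc : 0 < ch h := Real.sqrt_pos.mpr htanh
  have hk1 : (0:ℝ) < 1 + κ := by linarith
  set t := ch h ^ ((1:ℝ)/2) with htdef
  set u := (1 + κ) ^ ((1:ℝ)/4) with hudef
  have ht0 : 0 < t := Real.rpow_pos_of_pos hc _
  have hu0 : 0 < u := Real.rpow_pos_of_pos hk1 _
  have ht2 : t ^ 2 = ch h := by
    rw [htdef, ← Real.rpow_natCast (ch h ^ ((1:ℝ)/2)) 2, ← Real.rpow_mul hc.le]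
    norm_num
  have hu4 : u ^ 4 = 1 + κ := by
    rw [hudef, ← Real.rpow_natCast ((1+κ) ^ ((1:ℝ)/4)) 4, ← Real.rpow_mul hk1.le]
    norm_num
  have hu2 : u ^ 2 = Real.sqrt (1 + κ) := by
    rw [hudef, ← Real.rpow_natCast ((1+κ) ^ ((1:ℝ)/4)) 2, ← Real.rpow_mul hk1.le,
      Real.sqrt_eq_rpow]
    norm_num
  have h5 : ch h ^ ((5:ℝ)/2) = t ^ 5 := by
    rw [htdef, ← Real.rpow_natCast (ch h ^ ((1:ℝ)/2)) 5, ← Real.rpow_mul hc.le]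
    norm_num
  have h3 : ch h ^ (-(3:ℝ)/2) = (t ^ 3)⁻¹ := by
    rw [htdef, ← Real.rpow_natCast (ch h ^ ((1:ℝ)/2)) 3, ← Real.rpow_mul hc.le,
      ← Real.rpow_neg hc.le]
    norm_num
  have h1 : ch h ^ (-(1:ℝ)/2) = t⁻¹ := by
    rw [htdef, ← Real.rpow_neg hc.le]
    norm_num
  have h34 : (1 + κ) ^ ((3:ℝ)/4) = u ^ 3 := by
    rw [hudef, ← Real.rpow_natCast ((1+κ) ^ ((1:ℝ)/4)) 3, ← Real.rpow_mul hk1.le]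
    norm_num
  have hκu : κ = u ^ 4 - 1 := by rw [hu4]; ring
  -- reduce to the identity without D
  have key : Real.sqrt (1 + κ) *
      ((3 * h * ch h ^ 8 - 6 * ch h ^ 6 - 6 * h * ch h ^ 4 + 6 * ch h ^ 2 + 3 * h) * (1 + κ)
          + 4 * ch h ^ 6) / (4 * ch h ^ 3) =
      (ch h)⁻¹ * Real.sqrt (1 + κ) + h * f11 κ h ^ 2
        + e12 κ h * f11 κ h * ch h ^ (-(1 : ℝ) / 2) * (1 + κ) ^ ((1 : ℝ) / 4) := by
    rw [f11, e12, h5, h3, h1, h34, ← hudef, ← hu2, ← ht2, ← hu4]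
    rw [hκu]
    field_simp
    ring
  rw [eWB, e11, ← key]
  rw [Dhk] at hD ⊢
  field_simp
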